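/- Let 𝒵 be an elliptic zeta function of weight k, and let Φ_Λ, Ψ_Λ be the uniquely determined quantities with 2πiΦ_Λ = η_Λ(ω₂)H_Λ(ω₁) − η_Λ(ω₁)H_Λ(ω₂) and 2πiΨ_Λ = ω₁H_Λ(ω₂) − ω₂H_Λ(ω₁). Suppose τ ↦ Ψ_{Λ_τ} is not identically zero, where Λ_τ = ℤ + τℤ. Then f(τ) = Φ_{Λ_τ}/Ψ_{Λ_τ} is a meromorphic function on ℍ satisfying f(γτ) = (cτ+d)² f(τ) for all γ = [[a,b],[c,d]] ∈ SL₂(ℤ) and τ ∈ ℍ; i.e., f is a weight 2 meromorphic modular form for SL₂(ℤ). -/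

import Mathlib

open Complex

noncomputable section

/-- The lattice `ω₁ℤ + ω₂ℤ` as a subset of `ℂ`. -/
def latticeSet (ω₁ ω₂ : ℂ) : Set ℂ := {z : ℂ | ∃ m n : ℤ, z = (m : ℂ) * ω₁ + (n : ℂ) * ω₂}

/-- A subset of `ℂ` is a lattice if it is generated by a basis `(ω₁, ω₂)` with
`Im (ω₂/ω₁) > 0`. -/
def IsLattice (Λ : Set ℂ) : Prop := ∃ ω₁ ω₂ : ℂ, 0 < (ω₂ / ω₁).im ∧ Λ = latticeSet ω₁ ω₂

/-- The Weierstrass zeta function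
`ζ(Λ, z) = 1/z + Σ_{ω ∈ Λ, ω ≠ 0} (1/(z-ω) + 1/ω + z/ω²)`. -/
def wzeta (Λ : Set ℂ) (z : ℂ) : ℂ :=
  z⁻¹ + ∑' w : {w : ℂ // w ∈ Λ ∧ w ≠ 0}, ((z - w.1)⁻¹ + (w.1)⁻¹ + z / w.1 ^ 2)

/-- `η` is a quasi-period map for the Weierstrass zeta function of `Λ`:
`ζ(Λ, z+ω) = ζ(Λ, z) + η(ω)` for all `z ∈ ℂ` and `ω ∈ Λ`. -/
def IsQuasiPeriod (Λ : Set ℂ) (η : ℂ → ℂ) : Prop :=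
  ∀ ω ∈ Λ, ∀ z : ℂ, wzeta Λ (z + ω) = wzeta Λ z + η ω

/-- An elliptic zeta function of weight `k`, together with its quasi-period maps `H`:
(1) quasi-periodicity, (2) homogeneity of weight `k`, (3) the quasi-periods
`H_{Λ_τ}(τ)` and `H_{Λ_τ}(1)` are meromorphic in `τ` on the upper half-plane. -/
structure EllipticZeta (k : ℤ) where
  Z : Set ℂ → ℂ → ℂ
  H : Set ℂ → ℂ → ℂ
  quasi : ∀ Λ : Set ℂ, IsLattice Λ → ∀ ω ∈ Λ, ∀ z : ℂ, Z Λ (z + ω) = Z Λ z + H Λ ω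
  homog : ∀ Λ : Set ℂ, IsLattice Λ → ∀ α : ℂ, α ≠ 0 → ∀ z : ℂ,
    Z ((fun w => α * w) '' Λ) (α * z) = α ^ k * Z Λ z
  merom_tau : MeromorphicOn (fun τ : ℂ => H (latticeSet 1 τ) τ) {τ : ℂ | 0 < τ.im}
  merom_one : MeromorphicOn (fun τ : ℂ => H (latticeSet 1 τ) 1) {τ : ℂ | 0 < τ.im}

/-!
With `ω₁ = 1`, `ω₂ = τ`, the quantities `2πiΨ` and `2πiΦ` are the determinants
`ω₁ H(ω₂) - ω₂ H(ω₁)` and `H(ω₁) η(ω₂) - H(ω₂) η(ω₁)` of pairs of quasi-period maps, the identity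
being the quasi-period map of `z ↦ z`. For `γ = (a b; c d) ∈ SL₂(ℤ)` the basis `(1, γτ)` of
`Λ_{γτ}` is `(cτ + d)⁻¹` times the basis `(d + cτ, b + aτ)` of `Λ_τ`, so by homogeneity and
additivity each quasi-period pair on `Λ_{γτ}` is a scalar times the image under `γ` of the pair
on `Λ_τ`: the scalar is `(cτ + d)^(-k)` for `H`, `cτ + d` for `η` (the Weierstrass zeta function
has weight `-1`) and `(cτ + d)⁻¹` for the identity. Since `det γ = 1` the determinants only pick
up the scalars, and `Φ / Ψ` picks up `(cτ + d)^(1-k) / (cτ + d)^(-1-k) = (cτ + d)^2`.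

For meromorphy, `H(1)` and `H(τ)` are meromorphic by assumption, and
`η(ω) = ζ(Λ_τ, 1/2 + ω) - ζ(Λ_τ, 1/2)` is holomorphic in `τ`: the summands of `ζ(Λ_τ, z)` are
`O(‖(m, n)‖⁻³)` locally uniformly in `τ`, because `‖mτ + n‖` is bounded below by a multiple of
`‖(m, n)‖` on compact subsets of the upper half-plane.
-/

open Filter MatrixGroups

def IsQuasiPeriodicOn (Λ : Set ℂ) (G P : ℂ → ℂ) : Prop :=
  ∀ ω ∈ Λ, ∀ z : ℂ, G (z + ω) = G z + P ω

lemma isQuasiPeriodicOn_id (Λ : Set ℂ) : IsQuasiPeriodicOn Λ id id := fun _ _ _ => rfl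

lemma apply_add_intCast_mul_eq {G : ℂ → ℂ} {ω p : ℂ} (h : ∀ z, G (z + ω) = G z + p)
    (m : ℤ) (z : ℂ) : G (z + m * ω) = G z + m * p := by
  induction m using Int.induction_on with
  | zero => simp
  | succ n ih =>
    rw [show z + ((n + 1 : ℤ) : ℂ) * ω = z + (n : ℤ) * ω + ω by push_cast; ring, h, ih]
    push_cast; ring
  | pred n ih =>
    have := h (z + ((-n - 1 : ℤ) : ℂ) * ω)
    rw [show z + ((-n - 1 : ℤ) : ℂ) * ω + ω = z + ((-n : ℤ) : ℂ) * ω by push_cast; ring, ih] at this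
    push_cast at this ⊢
    linear_combination -this

lemma IsQuasiPeriodicOn.apply_intCast_mul_add {ω₁ ω₂ : ℂ} {G P : ℂ → ℂ}
    (h : IsQuasiPeriodicOn (latticeSet ω₁ ω₂) G P) (m n : ℤ) :
    P (m * ω₁ + n * ω₂) = m * P ω₁ + n * P ω₂ := by
  have h₁ := apply_add_intCast_mul_eq (h ω₁ ⟨1, 0, by simp⟩) m 0
  have h₂ := apply_add_intCast_mul_eq (h ω₂ ⟨0, 1, by simp⟩) n (0 + m * ω₁)
  have h₃ := h _ ⟨m, n, rfl⟩ 0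
  rw [← add_assoc] at h₃
  linear_combination h₂ + h₁ - h₃

lemma IsQuasiPeriodicOn.apply_mul_eq {Λ : Set ℂ} {G G' P P' : ℂ → ℂ} {α s ω : ℂ}
    (h : IsQuasiPeriodicOn Λ G P) (h' : IsQuasiPeriodicOn ((fun w => α * w) '' Λ) G' P')
    (hG : ∀ z, G' (α * z) = s * G z) (hω : ω ∈ Λ) : P' (α * ω) = s * P ω := by
  have h₁ := h' (α * ω) ⟨ω, hω, rfl⟩ (α * 0)
  rw [← mul_add, hG, hG, h ω hω] at h₁
  linear_combination -h₁

lemma image_mul_latticeSet (α ω₁ ω₂ : ℂ) :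
    (fun w => α * w) '' latticeSet ω₁ ω₂ = latticeSet (α * ω₁) (α * ω₂) := by
  ext z
  constructor
  · rintro ⟨w, ⟨m, n, rfl⟩, rfl⟩
    exact ⟨m, n, by ring⟩
  · rintro ⟨m, n, rfl⟩
    exact ⟨m * ω₁ + n * ω₂, ⟨m, n, rfl⟩, by ring⟩

lemma isLattice_latticeSet_one {τ : ℂ} (hτ : 0 < τ.im) : IsLattice (latticeSet 1 τ) :=
  ⟨1, τ, by simpa using hτ, rfl⟩

lemma latticeSet_eq_of_det_eq_one {a b c d : ℤ} (hdet : a * d - b * c = 1) (ω₁ ω₂ : ℂ) :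
    latticeSet (d * ω₁ + c * ω₂) (b * ω₁ + a * ω₂) = latticeSet ω₁ ω₂ := by
  have hdetC : (a * d - b * c : ℂ) = 1 := mod_cast hdet
  ext z
  constructor
  · rintro ⟨m, n, rfl⟩
    exact ⟨m * d + n * b, m * c + n * a, by push_cast; ring⟩
  · rintro ⟨m, n, rfl⟩
    refine ⟨a * m - b * n, d * n - c * m, ?_⟩
    push_cast
    linear_combination (-(m * ω₁ + n * ω₂)) * hdetC

lemma wzeta_image_mul {α : ℂ} (hα : α ≠ 0) (Λ : Set ℂ) (z : ℂ) :
    wzeta ((fun w => α * w) '' Λ) (α * z) = α⁻¹ * wzeta Λ z := by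
  let e : {w : ℂ // w ∈ Λ ∧ w ≠ 0} ≃ {w : ℂ // w ∈ (fun w => α * w) '' Λ ∧ w ≠ 0} :=
    (Equiv.mulLeft₀ α hα).subtypeEquiv fun w => by
      simp [(mul_right_injective₀ hα).mem_set_image, hα]
  unfold wzeta
  rw [mul_add, ← tsum_mul_left, ← e.tsum_eq, mul_inv]
  congr 1
  refine tsum_congr fun w => ?_
  have hw := w.2.2
  change (α * z - α * w)⁻¹ + (α * w)⁻¹ + α * z / (α * w) ^ 2 = _
  have hdiv : α * z / (α * w) ^ 2 = α⁻¹ * (z / w ^ 2) := by field_simp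
  rw [← mul_sub, mul_inv, mul_inv, hdiv]
  ring

lemma intCast_mul_add_intCast_eq_zero_iff {τ : ℂ} (hτ : 0 < τ.im) {m n : ℤ} :
    (m : ℂ) * τ + n = 0 ↔ m = 0 ∧ n = 0 := by
  refine ⟨fun h => ?_, by rintro ⟨rfl, rfl⟩; simp⟩
  have hm : m = 0 := by simpa [hτ.ne'] using congrArg Complex.im h
  subst hm
  exact ⟨rfl, by simpa using h⟩

lemma intCast_mul_add_intCast_ne_zero {τ : ℂ} (hτ : 0 < τ.im) {x : Fin 2 → ℤ} (hx : x ≠ 0) :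
    (x 0 : ℂ) * τ + x 1 ≠ 0 := fun h => hx <| by
  obtain ⟨h₀, h₁⟩ := (intCast_mul_add_intCast_eq_zero_iff hτ).1 h
  ext i
  fin_cases i <;> simp [h₀, h₁]

section Moebius

variable {a b c d : ℤ} {τ : ℂ}

lemma denom_ne_zero (hdet : a * d - b * c = 1) (hτ : 0 < τ.im) : (c : ℂ) * τ + d ≠ 0 :=
    fun h => by
  obtain ⟨rfl, rfl⟩ := (intCast_mul_add_intCast_eq_zero_iff hτ).1 h
  simp at hdet

lemma im_moebius_pos (hdet : a * d - b * c = 1) (hτ : 0 < τ.im) :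
    0 < (((a : ℂ) * τ + b) / ((c : ℂ) * τ + d)).im := by
  let γ : SL(2, ℤ) := ⟨!![a, b; c, d], by simp [Matrix.det_fin_two, hdet]⟩
  have h := (γ • (⟨τ, hτ⟩ : UpperHalfPlane)).coe_im_pos
  rw [UpperHalfPlane.coe_specialLinearGroup_apply] at h
  simpa [γ] using h

lemma latticeSet_moebius (hdet : a * d - b * c = 1) (hτ : 0 < τ.im) :
    latticeSet 1 (((a : ℂ) * τ + b) / ((c : ℂ) * τ + d))
      = (fun w => ((c : ℂ) * τ + d)⁻¹ * w) '' latticeSet 1 τ := by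
  have hv := denom_ne_zero hdet hτ
  rw [← latticeSet_eq_of_det_eq_one hdet 1 τ, image_mul_latticeSet]
  congr 1 <;> field_simp <;> ring

lemma IsQuasiPeriodicOn.moebius (hdet : a * d - b * c = 1) (hτ : 0 < τ.im)
    {G G' P P' : ℂ → ℂ} {s : ℂ}
    (h : IsQuasiPeriodicOn (latticeSet 1 τ) G P)
    (h' : IsQuasiPeriodicOn (latticeSet 1 (((a : ℂ) * τ + b) / ((c : ℂ) * τ + d))) G' P')
    (hG : ∀ z, G' (((c : ℂ) * τ + d)⁻¹ * z) = s * G z) :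
    P' (((a : ℂ) * τ + b) / ((c : ℂ) * τ + d)) = s * (b * P 1 + a * P τ) ∧
      P' 1 = s * (d * P 1 + c * P τ) := by
  have hv := denom_ne_zero hdet hτ
  rw [latticeSet_moebius hdet hτ] at h'
  have key (m n : ℤ) : P' (((c : ℂ) * τ + d)⁻¹ * (m * 1 + n * τ)) = s * (m * P 1 + n * P τ) := by
    rw [h.apply_mul_eq h' hG ⟨m, n, rfl⟩, h.apply_intCast_mul_add]
  constructor
  · convert key b a using 2
    field_simp
    ring
  · convert key d c using 2
    field_simp
    ring

lemma EllipticZeta.H_moebius {k : ℤ} (Z : EllipticZeta k) (hdet : a * d - b * c = 1)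
    (hτ : 0 < τ.im) :
    let τ' := ((a : ℂ) * τ + b) / ((c : ℂ) * τ + d)
    Z.H (latticeSet 1 τ') τ' = ((c : ℂ) * τ + d)⁻¹ ^ k
        * (b * Z.H (latticeSet 1 τ) 1 + a * Z.H (latticeSet 1 τ) τ) ∧
      Z.H (latticeSet 1 τ') 1 = ((c : ℂ) * τ + d)⁻¹ ^ k
        * (d * Z.H (latticeSet 1 τ) 1 + c * Z.H (latticeSet 1 τ) τ) := by
  have hΛ := isLattice_latticeSet_one hτ
  refine IsQuasiPeriodicOn.moebius hdet hτ (Z.quasi _ hΛ)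
    (Z.quasi _ (isLattice_latticeSet_one (im_moebius_pos hdet hτ))) fun z => ?_
  rw [latticeSet_moebius hdet hτ]
  exact Z.homog _ hΛ _ (inv_ne_zero (denom_ne_zero hdet hτ)) z

lemma IsQuasiPeriod.moebius {η η' : ℂ → ℂ} (hdet : a * d - b * c = 1) (hτ : 0 < τ.im)
    (hη : IsQuasiPeriod (latticeSet 1 τ) η)
    (hη' : IsQuasiPeriod (latticeSet 1 (((a : ℂ) * τ + b) / ((c : ℂ) * τ + d))) η') :
    η' (((a : ℂ) * τ + b) / ((c : ℂ) * τ + d)) = ((c : ℂ) * τ + d) * (b * η 1 + a * η τ) ∧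
      η' 1 = ((c : ℂ) * τ + d) * (d * η 1 + c * η τ) := by
  refine IsQuasiPeriodicOn.moebius hdet hτ hη hη' fun z => ?_
  rw [latticeSet_moebius hdet hτ, wzeta_image_mul (inv_ne_zero (denom_ne_zero hdet hτ)), inv_inv]

end Moebius

def periodDet (P Q : ℂ → ℂ) (ω₁ ω₂ : ℂ) : ℂ := P ω₁ * Q ω₂ - P ω₂ * Q ω₁

lemma periodDet_moebius {a b c d : ℤ} (hdet : a * d - b * c = 1)
    {P Q P' Q' : ℂ → ℂ} {ω₁ ω₂ ω₁' ω₂' s t : ℂ}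
    (hP : P' ω₂' = s * (b * P ω₁ + a * P ω₂) ∧ P' ω₁' = s * (d * P ω₁ + c * P ω₂))
    (hQ : Q' ω₂' = t * (b * Q ω₁ + a * Q ω₂) ∧ Q' ω₁' = t * (d * Q ω₁ + c * Q ω₂)) :
    periodDet P' Q' ω₁' ω₂' = s * t * periodDet P Q ω₁ ω₂ := by
  have hdetC : (a * d - b * c : ℂ) = 1 := mod_cast hdet
  rw [periodDet, periodDet, hP.1, hP.2, hQ.1, hQ.2]
  linear_combination s * t * (P ω₁ * Q ω₂ - P ω₂ * Q ω₁) * hdetC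

section Holomorphy

lemma norm_inv_sub_add_inv_add_div_sq_le {z w : ℂ} (h : 2 * ‖z‖ ≤ ‖w‖) :
    ‖(z - w)⁻¹ + w⁻¹ + z / w ^ 2‖ ≤ 2 * ‖z‖ ^ 2 / ‖w‖ ^ 3 := by
  rcases eq_or_ne w 0 with rfl | hw
  · obtain rfl : z = 0 := norm_le_zero_iff.1 (by rw [norm_zero] at h; linarith [norm_nonneg z])
    simp
  have hw' : 0 < ‖w‖ := norm_pos_iff.2 hw
  have hzw : ‖w‖ / 2 ≤ ‖z - w‖ := by
    have := norm_sub_norm_le w z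
    rw [norm_sub_rev] at this
    linarith
  have hzw0 : z - w ≠ 0 := norm_pos_iff.1 (by linarith)
  have hsum : (z - w)⁻¹ + w⁻¹ + z / w ^ 2 = z ^ 2 / (w ^ 2 * (z - w)) := by
    field_simp
    ring
  rw [hsum, norm_div, norm_mul, norm_pow, norm_pow]
  calc ‖z‖ ^ 2 / (‖w‖ ^ 2 * ‖z - w‖) ≤ ‖z‖ ^ 2 / (‖w‖ ^ 2 * (‖w‖ / 2)) := by gcongr
    _ = 2 * ‖z‖ ^ 2 / ‖w‖ ^ 3 := by field_simp

lemma exists_pos_mul_norm_le_norm_of_isCompact {K : Set ℂ} (hK : IsCompact K)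
    (hKU : K ⊆ {τ : ℂ | 0 < τ.im}) :
    ∃ δ > 0, ∀ τ ∈ K, ∀ x : Fin 2 → ℤ, δ * ‖x‖ ≤ ‖(x 0 : ℂ) * τ + x 1‖ := by
  have hK' : IsCompact (UpperHalfPlane.coe ⁻¹' K) :=
    UpperHalfPlane.isEmbedding_coe.isInducing.isCompact_preimage' hK
      (by rwa [UpperHalfPlane.range_coe])
  obtain ⟨A, B, hB, hAB⟩ := UpperHalfPlane.subset_verticalStrip_of_isCompact hK'
  refine ⟨EisensteinSeries.r ⟨⟨A, B⟩, hB⟩, EisensteinSeries.r_pos _, fun τ hτ x => ?_⟩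
  rcases eq_or_ne x 0 with rfl | hx
  · simp
  let τ' : UpperHalfPlane := ⟨τ, hKU hτ⟩
  calc EisensteinSeries.r ⟨⟨A, B⟩, hB⟩ * ‖x‖ ≤ EisensteinSeries.r τ' * ‖x‖ := by
        gcongr
        exact EisensteinSeries.r_lower_bound_on_verticalStrip τ' hB (hAB (show τ' ∈ _ from hτ))
    _ ≤ ‖(x 0 : ℂ) * τ + x 1‖ := EisensteinSeries.r_mul_max_le τ' hx

lemma wzeta_latticeSet_eq_tsum {τ : ℂ} (hτ : 0 < τ.im) (z : ℂ) :
    wzeta (latticeSet 1 τ) z = z⁻¹ + ∑' x : {x : Fin 2 → ℤ // x ≠ 0},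
      ((z - (x.1 0 * τ + x.1 1))⁻¹ + ((x.1 0 : ℂ) * τ + x.1 1)⁻¹
        + z / ((x.1 0 : ℂ) * τ + x.1 1) ^ 2) := by
  let e : {x : Fin 2 → ℤ // x ≠ 0} → {w : ℂ // w ∈ latticeSet 1 τ ∧ w ≠ 0} := fun x =>
    ⟨x.1 0 * τ + x.1 1, ⟨x.1 1, x.1 0, by ring⟩, intCast_mul_add_intCast_ne_zero hτ x.2⟩
  have he : e.Bijective := by
    constructor
    · intro x y hxy
      obtain ⟨h₀, h₁⟩ := (intCast_mul_add_intCast_eq_zero_iff hτ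
        (m := x.1 0 - y.1 0) (n := x.1 1 - y.1 1)).1 (by
          push_cast
          linear_combination congrArg Subtype.val hxy)
      ext i
      fin_cases i <;> simp <;> omega
    · rintro ⟨w, ⟨m, n, rfl⟩, hw⟩
      refine ⟨⟨![n, m], fun h => hw ?_⟩, Subtype.ext ?_⟩
      · simp [show n = 0 from congrFun h 0, show m = 0 from congrFun h 1]
      · simp [e]
        ring
  rw [wzeta, ← (Equiv.ofBijective e he).tsum_eq]
  rfl

variable {z : ℂ → ℂ}

lemma tendstoLocallyUniformlyOn_wzeta_tsum (hz : ContinuousOn z {τ : ℂ | 0 < τ.im}) :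
    TendstoLocallyUniformlyOn
      (fun (s : Finset {x : Fin 2 → ℤ // x ≠ 0}) τ => ∑ x ∈ s,
        ((z τ - (x.1 0 * τ + x.1 1))⁻¹ + ((x.1 0 : ℂ) * τ + x.1 1)⁻¹
          + z τ / ((x.1 0 : ℂ) * τ + x.1 1) ^ 2))
      (fun τ => ∑' x : {x : Fin 2 → ℤ // x ≠ 0},
        ((z τ - (x.1 0 * τ + x.1 1))⁻¹ + ((x.1 0 : ℂ) * τ + x.1 1)⁻¹
          + z τ / ((x.1 0 : ℂ) * τ + x.1 1) ^ 2))
      atTop {τ : ℂ | 0 < τ.im} := by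
  rw [tendstoLocallyUniformlyOn_iff_forall_isCompact UpperHalfPlane.isOpen_upperHalfPlaneSet]
  intro K hKU hK
  obtain ⟨δ, hδ, hδK⟩ := exists_pos_mul_norm_le_norm_of_isCompact hK hKU
  obtain ⟨M, hM⟩ := hK.exists_bound_of_continuousOn (hz.mono hKU)
  have hsum : Summable fun x : {x : Fin 2 → ℤ // x ≠ 0} => 2 * M ^ 2 / (δ * ‖x.1‖) ^ 3 := by
    refine (((EisensteinSeries.summable_one_div_norm_rpow (k := 3) (by norm_num)).subtype
      (· ≠ 0)).mul_left (2 * M ^ 2 / δ ^ 3)).congr fun x => ?_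
    simp only [Function.comp_apply, Real.rpow_neg (norm_nonneg _)]
    norm_cast
    field_simp
  have hlarge : ∀ᶠ x : {x : Fin 2 → ℤ // x ≠ 0} in cofinite, 2 * M / δ ≤ ‖x.1‖ :=
    ((cocompact_eq_cofinite (Fin 2 → ℤ) ▸ tendsto_norm_cocompact_atTop).comp
      Subtype.val_injective.tendsto_cofinite).eventually_ge_atTop _
  refine tendstoUniformlyOn_tsum_of_cofinite_eventually hsum (hlarge.mono fun x hxM τ hτ => ?_)
  have hw := hδK τ hτ x.1
  have hx : 0 < δ * ‖x.1‖ := mul_pos hδ (norm_pos_iff.2 x.2)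
  rw [div_le_iff₀ hδ] at hxM
  calc _ ≤ 2 * ‖z τ‖ ^ 2 / ‖(x.1 0 : ℂ) * τ + x.1 1‖ ^ 3 :=
        norm_inv_sub_add_inv_add_div_sq_le (by linarith [hM τ hτ])
    _ ≤ 2 * M ^ 2 / (δ * ‖x.1‖) ^ 3 := by
        have := hM τ hτ
        gcongr

theorem differentiableOn_wzeta_latticeSet (hz : DifferentiableOn ℂ z {τ : ℂ | 0 < τ.im})
    (hzΛ : ∀ τ : ℂ, 0 < τ.im → z τ ∉ latticeSet 1 τ) :
    DifferentiableOn ℂ (fun τ => wzeta (latticeSet 1 τ) (z τ)) {τ : ℂ | 0 < τ.im} := by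
  have hz0 : ∀ τ ∈ {τ : ℂ | 0 < τ.im}, z τ ≠ 0 := fun τ hτ h =>
    hzΛ τ hτ (h ▸ ⟨0, 0, by simp⟩)
  have hterm (x : {x : Fin 2 → ℤ // x ≠ 0}) : DifferentiableOn ℂ (fun τ =>
      (z τ - (x.1 0 * τ + x.1 1))⁻¹ + ((x.1 0 : ℂ) * τ + x.1 1)⁻¹
        + z τ / ((x.1 0 : ℂ) * τ + x.1 1) ^ 2) {τ : ℂ | 0 < τ.im} := by
    have hw : DifferentiableOn ℂ (fun τ : ℂ => (x.1 0 : ℂ) * τ + x.1 1) {τ : ℂ | 0 < τ.im} := by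
      fun_prop
    have hw0 (τ : ℂ) (hτ : 0 < τ.im) := intCast_mul_add_intCast_ne_zero hτ x.2
    refine (((hz.sub hw).inv fun τ hτ => sub_ne_zero.2 fun h => hzΛ τ hτ ?_).add
      (hw.inv hw0)).add (hz.div (hw.pow 2) fun τ hτ => pow_ne_zero 2 (hw0 τ hτ))
    exact h ▸ ⟨x.1 1, x.1 0, by ring⟩
  have hsum := (tendstoLocallyUniformlyOn_wzeta_tsum hz.continuousOn).differentiableOn
    (Eventually.of_forall fun s => DifferentiableOn.fun_sum fun x _ => hterm x)
    UpperHalfPlane.isOpen_upperHalfPlaneSet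
  exact ((hz.inv hz0).add hsum).congr fun τ hτ => wzeta_latticeSet_eq_tsum hτ _

end Holomorphy

lemma half_add_notMem_latticeSet {τ ω : ℂ} (hτ : 0 < τ.im) (hω : ω ∈ latticeSet 1 τ) :
    1 / 2 + ω ∉ latticeSet 1 τ := by
  rintro ⟨p, q, h⟩
  obtain ⟨m, n, rfl⟩ := hω
  obtain rfl : n = q := by simpa [hτ.ne'] using congrArg Complex.im h
  have hre : 2⁻¹ + ((m : ℝ) + n * τ.re) = p + n * τ.re := by simpa using congrArg Complex.re h
  have : (2 * (p - m) : ℤ) = 1 := by exact_mod_cast (by linarith : (2 * (p - m) : ℝ) = 1)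
  omega

-- The shift by `1 / 2` keeps the argument of `wzeta` off the lattice, where the summand
-- `(z - w)⁻¹` would take the junk value `0⁻¹ = 0`.
lemma differentiableOn_eta (η : ℂ → ℂ → ℂ)
    (hη : ∀ τ : ℂ, 0 < τ.im → IsQuasiPeriod (latticeSet 1 τ) (η τ)) (m n : ℤ) :
    DifferentiableOn ℂ (fun τ => η τ (m * 1 + n * τ)) {τ : ℂ | 0 < τ.im} := by
  have h₁ := differentiableOn_wzeta_latticeSet (z := fun τ => 1 / 2 + (m * 1 + n * τ))
    (by fun_prop) fun τ hτ => half_add_notMem_latticeSet hτ ⟨m, n, rfl⟩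
  have h₂ := differentiableOn_wzeta_latticeSet (z := fun _ => 1 / 2) (by fun_prop)
    fun τ hτ => by simpa using half_add_notMem_latticeSet (ω := 0) hτ ⟨0, 0, by simp⟩
  refine (h₁.sub h₂).congr fun τ hτ => ?_
  rw [Pi.sub_apply, hη τ hτ _ ⟨m, n, rfl⟩ (1 / 2)]
  ring

theorem ellipticZeta_to_modularForm_general (k : ℤ) (Z : EllipticZeta k)
    (η : ℂ → ℂ → ℂ) (hη : ∀ τ : ℂ, 0 < τ.im → IsQuasiPeriod (latticeSet 1 τ) (η τ))
    (Φ Ψ : ℂ → ℂ)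
    (hΦ : ∀ τ : ℂ, 0 < τ.im → 2 * (Real.pi : ℂ) * Complex.I * Φ τ
        = η τ τ * Z.H (latticeSet 1 τ) 1 - η τ 1 * Z.H (latticeSet 1 τ) τ)
    (hΨ : ∀ τ : ℂ, 0 < τ.im → 2 * (Real.pi : ℂ) * Complex.I * Ψ τ
        = Z.H (latticeSet 1 τ) τ - τ * Z.H (latticeSet 1 τ) 1)
    (f : ℂ → ℂ) (hf : ∀ τ : ℂ, 0 < τ.im → f τ = Φ τ / Ψ τ) :
    MeromorphicOn f {τ : ℂ | 0 < τ.im} ∧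
    ∀ a b c d : ℤ, a * d - b * c = 1 → ∀ τ : ℂ, 0 < τ.im →
      f (((a : ℂ) * τ + b) / ((c : ℂ) * τ + d)) = ((c : ℂ) * τ + d) ^ 2 * f τ := by
  have hf' : ∀ τ : ℂ, 0 < τ.im → f τ = periodDet (Z.H (latticeSet 1 τ)) (η τ) 1 τ
      / periodDet id (Z.H (latticeSet 1 τ)) 1 τ := fun τ hτ => by
    rw [hf τ hτ, ← mul_div_mul_left _ _ two_pi_I_ne_zero, hΦ τ hτ, hΨ τ hτ]
    simp only [periodDet, id]
    ring
  constructor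
  · have hmero (m n : ℤ) := (differentiableOn_eta η hη m n).analyticOnNhd
      UpperHalfPlane.isOpen_upperHalfPlaneSet |>.meromorphicOn
    have hη₁ : MeromorphicOn (fun τ => η τ 1) {τ : ℂ | 0 < τ.im} := by simpa using hmero 1 0
    have hη₂ : MeromorphicOn (fun τ => η τ τ) {τ : ℂ | 0 < τ.im} := by simpa using hmero 0 1
    refine MeromorphicOn.congr (fun τ hτ => ?_) (fun τ hτ => (hf' τ hτ).symm)
      UpperHalfPlane.isOpen_upperHalfPlaneSet
    have hH₁ := Z.merom_one τ hτ
    have hH₂ := Z.merom_tau τ hτ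
    exact ((hH₁.mul (hη₂ τ hτ)).sub (hH₂.mul (hη₁ τ hτ))).div
      (((MeromorphicAt.const 1 τ).mul hH₂).sub ((MeromorphicAt.id τ).mul hH₁))
  · intro a b c d hdet τ hτ
    have hτ' := im_moebius_pos hdet hτ
    have hv := denom_ne_zero hdet hτ
    rw [hf' _ hτ', hf' τ hτ, periodDet_moebius hdet (Z.H_moebius hdet hτ)
      ((hη τ hτ).moebius hdet hτ (hη _ hτ')), periodDet_moebius hdet
      ((isQuasiPeriodicOn_id _).moebius hdet hτ (isQuasiPeriodicOn_id _) fun _ => rfl)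
      (Z.H_moebius hdet hτ)]
    field_simp

/-- if `τ ↦ Ψ_{Λ_τ}` is not identically zero, then
`f(τ) = Φ_{Λ_τ}/Ψ_{Λ_τ}` is a weight 2 meromorphic modular form for `SL₂(ℤ)`. -/
theorem ellipticZeta_to_modularForm (k : ℤ) (Z : EllipticZeta k)
    (η : ℂ → ℂ → ℂ) (hη : ∀ τ : ℂ, 0 < τ.im → IsQuasiPeriod (latticeSet 1 τ) (η τ))
    (Φ Ψ : ℂ → ℂ)
    (hΦ : ∀ τ : ℂ, 0 < τ.im → 2 * (Real.pi : ℂ) * Complex.I * Φ τ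
        = η τ τ * Z.H (latticeSet 1 τ) 1 - η τ 1 * Z.H (latticeSet 1 τ) τ)
    (hΨ : ∀ τ : ℂ, 0 < τ.im → 2 * (Real.pi : ℂ) * Complex.I * Ψ τ
        = Z.H (latticeSet 1 τ) τ - τ * Z.H (latticeSet 1 τ) 1)
    (hne : ∃ τ : ℂ, 0 < τ.im ∧ Ψ τ ≠ 0)
    (f : ℂ → ℂ) (hf : ∀ τ : ℂ, 0 < τ.im → f τ = Φ τ / Ψ τ) :
    MeromorphicOn f {τ : ℂ | 0 < τ.im} ∧
    ∀ a b c d : ℤ, a * d - b * c = 1 → ∀ τ : ℂ, 0 < τ.im →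
      f (((a : ℂ) * τ + b) / ((c : ℂ) * τ + d)) = ((c : ℂ) * τ + d) ^ 2 * f τ :=
  ellipticZeta_to_modularForm_general k Z η hη Φ Ψ hΦ hΨ f hf
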